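/- arXiv:2007.06864 — 2 statements merged into one kernel-verified Lean document; each statement's English description precedes it below -/
import Mathlib

section
/- First Korn inequality: let N ≥ 2 and let Ω ⊆ ℝ^N be an open set. Then for every continuously differentiable function u : ℝ^N → ℂ^N with compact support contained in Ω, one has ∫_Ω ‖∇u‖² ≤ 2 ∫_Ω ‖Eu‖², where Eu = ½(∇u + (∇u)ᵀ) is the symmetric gradient and ‖·‖ the Frobenius norm. -/
/-- Partial derivative `∂f/∂x_j` of a scalar complex-valued function on `ℝ^N`. -/
noncomputable def pdc {N : ℕ} (f : EuclideanSpace ℝ (Fin N) → ℂ) (j : Fin N)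
    (x : EuclideanSpace ℝ (Fin N)) : ℂ :=
  fderiv ℝ f x (EuclideanSpace.single j 1)

/-- Entry `(i,j)` of the Jacobian matrix of a vector field `u : ℝ^N → ℂ^N`. -/
noncomputable def jac {N : ℕ} (u : EuclideanSpace ℝ (Fin N) → Fin N → ℂ)
    (x : EuclideanSpace ℝ (Fin N)) (i j : Fin N) : ℂ :=
  pdc (fun y => u y i) j x

/-!
Write `a i j = ∂ⱼuᵢ`. Pointwise, `2‖Eu‖² = ‖∇u‖² + ∑ᵢⱼ ⟪a i j, a j i⟫_ℝ`, so it suffices that the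
cross term has nonnegative integral. Integrating by parts twice and using the symmetry of second
derivatives gives `∫ ⟪∂ⱼuᵢ, ∂ᵢuⱼ⟫ = ∫ ⟪∂ᵢuᵢ, ∂ⱼuⱼ⟫`, so the cross term integrates to
`∫ |div u|² ≥ 0`. For `C¹` fields the second integration by parts is justified by mollifying one
factor and passing to the limit.
-/

open MeasureTheory Filter Topology ContinuousLinearMap
open scoped Convolution RealInnerProductSpace

variable {E F G W : Type*} [NormedAddCommGroup E] [NormedSpace ℝ E]
  [NormedAddCommGroup F] [NormedSpace ℝ F] [NormedAddCommGroup G] [NormedSpace ℝ G]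
  [NormedAddCommGroup W] [NormedSpace ℝ W]

theorem HasCompactSupport.bilinear_left {X : Type*} [TopologicalSpace X] {f : X → F}
    (hf : HasCompactSupport f) (B : F →L[ℝ] G →L[ℝ] W) (g : X → G) :
    HasCompactSupport (fun x => B (f x) (g x)) :=
  hf.mono fun x hx h0 => hx (by simp only [h0, map_zero, zero_apply])

theorem fderiv_fderiv_apply {g : E → G} {x : E} (hg : DifferentiableAt ℝ (fderiv ℝ g) x)
    (v w : E) : fderiv ℝ (fun y => fderiv ℝ g y w) x v = fderiv ℝ (fderiv ℝ g) x v w := by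
  rw [fderiv_clm_apply hg (differentiableAt_const w)]
  simp

theorem exists_seq_contDiffBump_rOut_tendsto_zero {X : Type*} (c : X) :
    ∃ φ : ℕ → ContDiffBump c, Tendsto (fun n => (φ n).rOut) atTop (𝓝 0) := by
  refine ⟨fun n => ⟨1 / (n + 1), 2 / (n + 1), by positivity, by gcongr; norm_num⟩, ?_⟩
  simpa only [mul_one_div, mul_zero] using
    tendsto_one_div_add_atTop_nhds_zero_nat.const_mul (2 : ℝ)

variable [MeasurableSpace E] [BorelSpace E] [FiniteDimensional ℝ E] {μ : Measure E}
  [μ.IsAddHaarMeasure]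

theorem integral_bilinear_fderiv_fderiv_eq_neg {f : E → F} {g : E → G}
    (B : F →L[ℝ] G →L[ℝ] W) (hf : ContDiff ℝ 1 f) (hcf : HasCompactSupport f)
    (hg : ContDiff ℝ 2 g) (v w : E) :
    ∫ x, B (fderiv ℝ f x v) (fderiv ℝ g x w) ∂μ
      = -∫ x, B (f x) (fderiv ℝ (fderiv ℝ g) x v w) ∂μ := by
  have hg' : ContDiff ℝ 1 (fderiv ℝ g) := hg.fderiv_right le_rfl
  have hgw : ContDiff ℝ 1 fun x => fderiv ℝ g x w := hg'.clm_apply contDiff_const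
  simp_rw [← fderiv_fderiv_apply (hg'.differentiable one_ne_zero _)]
  rw [integral_bilinear_fderiv_right_eq_neg_left_of_integrable (f := f)
    (g := fun y => fderiv ℝ g y w), neg_neg]
  · exact (B.continuous₂.comp₂ ((hf.continuous_fderiv one_ne_zero).clm_apply continuous_const)
      hgw.continuous).integrable_of_hasCompactSupport ((hcf.fderiv_apply ℝ v).bilinear_left B _)
  · exact (B.continuous₂.comp₂ hf.continuous ((hgw.continuous_fderiv one_ne_zero).clm_apply
      continuous_const)).integrable_of_hasCompactSupport (hcf.bilinear_left B _)
  · exact (B.continuous₂.comp₂ hf.continuous hgw.continuous).integrable_of_hasCompactSupport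
      (hcf.bilinear_left B _)
  · exact fun x _ => hf.differentiable one_ne_zero x
  · exact fun x _ => hgw.differentiable one_ne_zero x

theorem integral_bilinear_fderiv_fderiv_comm_of_contDiff_two {f : E → F} {g : E → G}
    (B : F →L[ℝ] G →L[ℝ] W) (hf : ContDiff ℝ 1 f) (hcf : HasCompactSupport f)
    (hg : ContDiff ℝ 2 g) (v w : E) :
    ∫ x, B (fderiv ℝ f x v) (fderiv ℝ g x w) ∂μ
      = ∫ x, B (fderiv ℝ f x w) (fderiv ℝ g x v) ∂μ := by
  simp_rw [integral_bilinear_fderiv_fderiv_eq_neg B hf hcf hg,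
    (hg.contDiffAt.isSymmSndFDerivAt (by simp)).eq v w]

theorem ContDiffBump.norm_normed_convolution_le (φ : ContDiffBump (0 : E)) {k : E → G} {C : ℝ}
    (hC : ∀ x, ‖k x‖ ≤ C) (x : E) : ‖(φ.normed μ ⋆[lsmul ℝ ℝ, μ] k) x‖ ≤ C := by
  rw [convolution_def]
  calc ‖∫ t, lsmul ℝ ℝ (φ.normed μ t) (k (x - t)) ∂μ‖ ≤ ∫ t, φ.normed μ t * C ∂μ := by
        refine norm_integral_le_of_norm_le (φ.integrable_normed.mul_const C)
          (ae_of_all _ fun t => ?_)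
        rw [lsmul_apply, norm_smul, Real.norm_of_nonneg (φ.nonneg_normed t)]
        exact mul_le_mul_of_nonneg_left (hC _) (φ.nonneg_normed t)
    _ = C := by rw [integral_mul_const, φ.integral_normed, one_mul]

theorem fderiv_normed_convolution_apply {g : E → G} (hg : ContDiff ℝ 1 g)
    (hcg : HasCompactSupport g) (φ : ContDiffBump (0 : E)) (x v : E) :
    fderiv ℝ (φ.normed μ ⋆[lsmul ℝ ℝ, μ] g) x v
      = (φ.normed μ ⋆[lsmul ℝ ℝ, μ] fun y => fderiv ℝ g y v) x := by
  have hφ : LocallyIntegrable (φ.normed μ) μ := φ.continuous_normed.locallyIntegrable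
  rw [(hcg.hasFDerivAt_convolution_right (lsmul ℝ ℝ) hφ hg x).fderiv]
  exact convolution_precompR_apply (lsmul ℝ ℝ) hφ (hcg.fderiv ℝ)
    (hg.continuous_fderiv one_ne_zero) x v

variable [CompleteSpace G]

theorem tendsto_integral_bilinear_normed_convolution {h : E → F} {k : E → G}
    (B : F →L[ℝ] G →L[ℝ] W) (hh : Continuous h) (hch : HasCompactSupport h)
    (hk : Continuous k) {C : ℝ} (hC : ∀ x, ‖k x‖ ≤ C) {φ : ℕ → ContDiffBump (0 : E)}
    (hφ : Tendsto (fun n => (φ n).rOut) atTop (𝓝 0)) :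
    Tendsto (fun n => ∫ x, B (h x) (((φ n).normed μ ⋆[lsmul ℝ ℝ, μ] k) x) ∂μ) atTop
      (𝓝 (∫ x, B (h x) (k x) ∂μ)) := by
  refine tendsto_integral_of_dominated_convergence (fun x => ‖B‖ * ‖h x‖ * C)
    (fun n => ?_) ?_ (fun n => ae_of_all _ fun x => ?_) (ae_of_all _ fun x => ?_)
  · exact (B.continuous₂.comp₂ hh ((φ n).hasCompactSupport_normed.continuous_convolution_left _
      (φ n).continuous_normed hk.locallyIntegrable)).aestronglyMeasurable
  · exact ((hh.norm.integrable_of_hasCompactSupport hch.norm).const_mul ‖B‖).mul_const C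
  · calc ‖B (h x) (((φ n).normed μ ⋆[lsmul ℝ ℝ, μ] k) x)‖
        ≤ ‖B‖ * ‖h x‖ * ‖((φ n).normed μ ⋆[lsmul ℝ ℝ, μ] k) x‖ := B.le_opNorm₂ _ _
      _ ≤ ‖B‖ * ‖h x‖ * C := by gcongr; exact (φ n).norm_normed_convolution_le hC x
  · exact ((B (h x)).continuous.tendsto _).comp
      (ContDiffBump.convolution_tendsto_right_of_continuous hφ hk x)

theorem integral_bilinear_fderiv_fderiv_comm {f : E → F} {g : E → G}
    (B : F →L[ℝ] G →L[ℝ] W) (hf : ContDiff ℝ 1 f) (hcf : HasCompactSupport f)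
    (hg : ContDiff ℝ 1 g) (hcg : HasCompactSupport g) (v w : E) :
    ∫ x, B (fderiv ℝ f x v) (fderiv ℝ g x w) ∂μ
      = ∫ x, B (fderiv ℝ f x w) (fderiv ℝ g x v) ∂μ := by
  obtain ⟨φ, hφ⟩ := exists_seq_contDiffBump_rOut_tendsto_zero (0 : E)
  have hmollified : ∀ n,
      ∫ x, B (fderiv ℝ f x v) (((φ n).normed μ ⋆[lsmul ℝ ℝ, μ] fun y => fderiv ℝ g y w) x) ∂μ
        = ∫ x, B (fderiv ℝ f x w)
            (((φ n).normed μ ⋆[lsmul ℝ ℝ, μ] fun y => fderiv ℝ g y v) x) ∂μ := by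
    intro n
    have hsmooth : ContDiff ℝ 2 ((φ n).normed μ ⋆[lsmul ℝ ℝ, μ] g) :=
      (φ n).hasCompactSupport_normed.contDiff_convolution_left _ (φ n).contDiff_normed
        hg.continuous.locallyIntegrable
    simpa only [fderiv_normed_convolution_apply hg hcg] using
      integral_bilinear_fderiv_fderiv_comm_of_contDiff_two B hf hcf hsmooth v w
  have hlim : ∀ v w : E, Tendsto (fun n => ∫ x, B (fderiv ℝ f x v)
      (((φ n).normed μ ⋆[lsmul ℝ ℝ, μ] fun y => fderiv ℝ g y w) x) ∂μ) atTop
      (𝓝 (∫ x, B (fderiv ℝ f x v) (fderiv ℝ g x w) ∂μ)) := by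
    intro v w
    have hgw := (hg.continuous_fderiv one_ne_zero).clm_apply (continuous_const (y := w))
    obtain ⟨C, hC⟩ := (hcg.fderiv_apply ℝ w).exists_bound_of_continuous hgw
    exact tendsto_integral_bilinear_normed_convolution B
      ((hf.continuous_fderiv one_ne_zero).clm_apply continuous_const) (hcf.fderiv_apply ℝ v)
      hgw hC hφ
  exact tendsto_nhds_unique ((hlim v w).congr hmollified) (hlim w v)

theorem Complex.two_mul_norm_add_div_two_sq (a b : ℂ) :
    2 * ‖(a + b) / 2‖ ^ 2 = (‖a‖ ^ 2 + ‖b‖ ^ 2) / 2 + ⟪a, b⟫ := by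
  rw [norm_div, Complex.norm_two, div_pow, norm_add_sq_real]
  ring

theorem two_mul_sum_norm_symm_sq {ι : Type*} [Fintype ι] (A : ι → ι → ℂ) :
    2 * ∑ i, ∑ j, ‖(A i j + A j i) / 2‖ ^ 2
      = ∑ i, ∑ j, ‖A i j‖ ^ 2 + ∑ i, ∑ j, ⟪A i j, A j i⟫ := by
  simp_rw [Finset.mul_sum, Complex.two_mul_norm_add_div_two_sq, Finset.sum_add_distrib,
    add_div, Finset.sum_add_distrib]
  rw [Finset.sum_comm (f := fun i j => ‖A j i‖ ^ 2 / 2), ← Finset.sum_add_distrib]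
  simp_rw [← Finset.sum_add_distrib, add_halves]

section Jacobian

variable {N : ℕ} {u : EuclideanSpace ℝ (Fin N) → Fin N → ℂ}

theorem jac_eq_zero_of_notMem_tsupport {x : EuclideanSpace ℝ (Fin N)} (hx : x ∉ tsupport u) :
    jac u x = 0 := by
  ext i j
  have hxi : x ∉ tsupport fun y => u y i :=
    fun h => hx (tsupport_comp_subset (g := fun v : Fin N → ℂ => v i) rfl u h)
  simp [jac, pdc, fderiv_of_notMem_tsupport ℝ hxi]

theorem continuous_jac (hu : ContDiff ℝ 1 u) : Continuous (jac u) :=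
  continuous_pi fun i => continuous_pi fun _ =>
    ((contDiff_pi.mp hu i).continuous_fderiv one_ne_zero).clm_apply continuous_const

theorem integrable_comp_jac (hu : ContDiff ℝ 1 u) (hsupp : HasCompactSupport u)
    {Φ : (Fin N → Fin N → ℂ) → ℝ} (hΦ : Continuous Φ) (hΦ₀ : Φ 0 = 0) :
    Integrable fun x => Φ (jac u x) := by
  have hjac : HasCompactSupport (jac u) :=
    hsupp.mono' fun x hx => by_contra fun h => hx (jac_eq_zero_of_notMem_tsupport h)
  exact (hΦ.comp (continuous_jac hu)).integrable_of_hasCompactSupport (hjac.comp_left hΦ₀)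

theorem integral_inner_jac_swap (hu : ContDiff ℝ 1 u) (hsupp : HasCompactSupport u)
    (i j : Fin N) :
    ∫ x, ⟪jac u x i j, jac u x j i⟫ = ∫ x, ⟪jac u x i i, jac u x j j⟫ :=
  integral_bilinear_fderiv_fderiv_comm (innerSL ℝ) (contDiff_pi.mp hu i)
    (hsupp.comp_left (g := fun v : Fin N → ℂ => v i) rfl) (contDiff_pi.mp hu j)
    (hsupp.comp_left (g := fun v : Fin N → ℂ => v j) rfl) (EuclideanSpace.single j 1)
    (EuclideanSpace.single i 1)

theorem integral_inner_jac_transpose_eq_integral_div_sq (hu : ContDiff ℝ 1 u)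
    (hsupp : HasCompactSupport u) :
    ∫ x, ∑ i, ∑ j, ⟪jac u x i j, jac u x j i⟫ = ∫ x, ‖∑ i, jac u x i i‖ ^ 2 := by
  have hint : ∀ i j k l : Fin N, Integrable fun x => ⟪jac u x i j, jac u x k l⟫ :=
    fun i j k l =>
      integrable_comp_jac hu hsupp (Φ := fun A => ⟪A i j, A k l⟫) (by fun_prop) (by simp)
  calc ∫ x, ∑ i, ∑ j, ⟪jac u x i j, jac u x j i⟫
      = ∑ i, ∑ j, ∫ x, ⟪jac u x i j, jac u x j i⟫ := by
        rw [integral_finsetSum _ fun i _ => integrable_finsetSum _ fun j _ => hint i j j i]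
        simp_rw [integral_finsetSum _ fun j _ => hint _ j j _]
    _ = ∑ i, ∑ j, ∫ x, ⟪jac u x i i, jac u x j j⟫ := by
        simp_rw [integral_inner_jac_swap hu hsupp]
    _ = ∫ x, ∑ i, ∑ j, ⟪jac u x i i, jac u x j j⟫ := by
        rw [integral_finsetSum _ fun i _ => integrable_finsetSum _ fun j _ => hint i i j j]
        simp_rw [integral_finsetSum _ fun j _ => hint _ _ j j]
    _ = ∫ x, ‖∑ i, jac u x i i‖ ^ 2 := by
        simp_rw [← inner_sum, ← sum_inner, real_inner_self_eq_norm_sq]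

end Jacobian

theorem first_korn_inequality_general (N : ℕ)
    (Ω : Set (EuclideanSpace ℝ (Fin N)))
    (u : EuclideanSpace ℝ (Fin N) → Fin N → ℂ)
    (hu : ContDiff ℝ 1 u)
    (hsupp : HasCompactSupport u) (hsuppΩ : tsupport u ⊆ Ω) :
    (∫ x in Ω, ∑ i, ∑ j, ‖jac u x i j‖ ^ 2) ≤
      2 * ∫ x in Ω, ∑ i, ∑ j, ‖(jac u x i j + jac u x j i) / 2‖ ^ 2 := by
  have hjac : ∀ x ∉ Ω, jac u x = 0 := fun x hx =>
    jac_eq_zero_of_notMem_tsupport fun h => hx (hsuppΩ h)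
  rw [setIntegral_eq_integral_of_forall_compl_eq_zero fun x hx => by simp [hjac x hx],
    setIntegral_eq_integral_of_forall_compl_eq_zero fun x hx => by simp [hjac x hx],
    ← integral_const_mul]
  simp_rw [two_mul_sum_norm_symm_sq]
  rw [integral_add
    (integrable_comp_jac hu hsupp (Φ := fun A => ∑ i, ∑ j, ‖A i j‖ ^ 2) (by fun_prop) (by simp))
    (integrable_comp_jac hu hsupp (Φ := fun A => ∑ i, ∑ j, ⟪A i j, A j i⟫) (by fun_prop)
      (by simp)), integral_inner_jac_transpose_eq_integral_div_sq hu hsupp]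
  exact le_add_of_nonneg_right (integral_nonneg fun x => by positivity)

/-- First Korn inequality: for every open `Ω ⊆ ℝ^N` and every `C¹` vector field
`u : ℝ^N → ℂ^N` with compact support contained in `Ω`,
`∫_Ω ‖∇u‖² ≤ 2 ∫_Ω ‖Eu‖²`, where `Eu = ½(∇u + (∇u)ᵀ)` and `‖·‖` is the
Frobenius norm. -/
theorem first_korn_inequality (N : ℕ) (hN : 2 ≤ N)
    (Ω : Set (EuclideanSpace ℝ (Fin N))) (hΩopen : IsOpen Ω)
    (u : EuclideanSpace ℝ (Fin N) → Fin N → ℂ)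
    (hu : ContDiff ℝ 1 u)
    (hsupp : HasCompactSupport u) (hsuppΩ : tsupport u ⊆ Ω) :
    (∫ x in Ω, ∑ i, ∑ j, ‖jac u x i j‖ ^ 2) ≤
      2 * ∫ x in Ω, ∑ i, ∑ j, ‖(jac u x i j + jac u x j i) / 2‖ ^ 2 :=
  first_korn_inequality_general N Ω u hu hsupp hsuppΩ
end

section
/- Helmholtz decomposition of Navier solutions: let u : Ω → ℂ^N be a smooth solution of the Navier equation on an open set Ω ⊆ ℝ^N, and define u_p = −∇(div u)/ω_p² and u_s = (∇(div u) − Δu)/ω_s². Then u = u_p + u_s on Ω, u_p satisfies Δu_p + ω_p² u_p = 0 componentwise on Ω, and u_s satisfies Δu_s + ω_s² u_s = 0 componentwise on Ω. -/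
open MeasureTheory Metric

/-- Divergence of a vector field `u : ℝ^N → ℂ^N`. -/
noncomputable def divC {N : ℕ} (u : EuclideanSpace ℝ (Fin N) → Fin N → ℂ)
    (x : EuclideanSpace ℝ (Fin N)) : ℂ :=
  ∑ i, jac u x i i

/-- Laplacian of a scalar complex-valued function on `ℝ^N`. -/
noncomputable def lapC {N : ℕ} (f : EuclideanSpace ℝ (Fin N) → ℂ)
    (x : EuclideanSpace ℝ (Fin N)) : ℂ :=
  ∑ j, pdc (pdc f j) j x

/-- `u` solves the Navier equation `μ Δu + (λ+μ) ∇(div u) + ρω² u = 0` on `Ω`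
(componentwise). -/
def NavierOn (mu lam rho om : ℝ) {N : ℕ}
    (u : EuclideanSpace ℝ (Fin N) → Fin N → ℂ)
    (Ω : Set (EuclideanSpace ℝ (Fin N))) : Prop :=
  ∀ x ∈ Ω, ∀ i, (mu : ℂ) * lapC (fun y => u y i) x
    + ((lam + mu : ℝ) : ℂ) * pdc (divC u) i x
    + ((rho * om ^ 2 : ℝ) : ℂ) * u x i = 0

/-- Longitudinal part `u_p = −∇(div u)/ω_p²`, with `ω_p² = ρω²/(λ+2μ)`. -/
noncomputable def uLong (mu lam rho om : ℝ) {N : ℕ}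
    (u : EuclideanSpace ℝ (Fin N) → Fin N → ℂ)
    (x : EuclideanSpace ℝ (Fin N)) (i : Fin N) : ℂ :=
  -pdc (divC u) i x / ((rho * om ^ 2 / (lam + 2 * mu) : ℝ) : ℂ)

/-- Transversal part `u_s = (∇(div u) − Δu)/ω_s²`, with `ω_s² = ρω²/μ`. -/
noncomputable def uTrans (mu rho om : ℝ) {N : ℕ}
    (u : EuclideanSpace ℝ (Fin N) → Fin N → ℂ)
    (x : EuclideanSpace ℝ (Fin N)) (i : Fin N) : ℂ :=
  (pdc (divC u) i x - lapC (fun y => u y i) x) / ((rho * om ^ 2 / mu : ℝ) : ℂ)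

/-!
Taking the divergence of the Navier equation shows that `div u` solves the Helmholtz equation
`Δv + ω_p² v = 0`; differentiating, so do all `∂ᵢ div u`, hence `u_p`. The decomposition
`u = u_p + u_s` is the Navier equation solved for `u`. Finally, on `Ω`,
`Δu_s = Δu - Δu_p = Δu + ω_p² u_p = Δu - ∇ div u = -ω_s² u_s`.
-/

open Filter Topology
open scoped ContDiff

section Calculus

variable {N : ℕ} {Ω : Set (EuclideanSpace ℝ (Fin N))} {f g : EuclideanSpace ℝ (Fin N) → ℂ}
  {x : EuclideanSpace ℝ (Fin N)} {i j : Fin N}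

theorem Filter.EventuallyEq.pdc_eq (h : f =ᶠ[𝓝 x] g) : pdc f j x = pdc g j x := by
  rw [pdc, pdc, h.fderiv_eq]

theorem Filter.EventuallyEq.pdc_eventuallyEq (h : f =ᶠ[𝓝 x] g) : pdc f j =ᶠ[𝓝 x] pdc g j :=
  (h.fderiv (𝕜 := ℝ)).mono fun y hy => by simp only [pdc, hy]

theorem Filter.EventuallyEq.lapC_eq (h : f =ᶠ[𝓝 x] g) : lapC f x = lapC g x :=
  Finset.sum_congr rfl fun _ _ => h.pdc_eventuallyEq.pdc_eq

theorem pdc_const (c : ℂ) : pdc (fun _ => c) j x = 0 := by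
  simp [pdc]

theorem pdc_add (hf : DifferentiableAt ℝ f x) (hg : DifferentiableAt ℝ g x) :
    pdc (fun y => f y + g y) j x = pdc f j x + pdc g j x := by
  simp only [pdc, fderiv_fun_add hf hg, add_apply]

theorem pdc_sub (hf : DifferentiableAt ℝ f x) (hg : DifferentiableAt ℝ g x) :
    pdc (fun y => f y - g y) j x = pdc f j x - pdc g j x := by
  simp only [pdc, fderiv_fun_sub hf hg, sub_apply]

theorem pdc_const_mul (hf : DifferentiableAt ℝ f x) (c : ℂ) :
    pdc (fun y => c * f y) j x = c * pdc f j x := by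
  simp only [pdc, fderiv_const_mul hf, smul_apply, smul_eq_mul]

theorem pdc_sum {ι : Type*} (s : Finset ι) {F : ι → EuclideanSpace ℝ (Fin N) → ℂ}
    (hF : ∀ k ∈ s, DifferentiableAt ℝ (F k) x) :
    pdc (fun y => ∑ k ∈ s, F k y) j x = ∑ k ∈ s, pdc (F k) j x := by
  simp only [pdc, fderiv_fun_sum hF, sum_apply]

theorem ContDiffOn.differentiableAt_of_isOpen (hΩ : IsOpen Ω) (hf : ContDiffOn ℝ ∞ f Ω)
    (hx : x ∈ Ω) : DifferentiableAt ℝ f x :=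
  (hf.differentiableOn (by simp)).differentiableAt (hΩ.mem_nhds hx)

theorem contDiffOn_pdc (hΩ : IsOpen Ω) (hf : ContDiffOn ℝ ∞ f Ω) (j : Fin N) :
    ContDiffOn ℝ ∞ (pdc f j) Ω :=
  (hf.fderiv_of_isOpen hΩ (by simp)).clm_apply contDiffOn_const

theorem contDiffOn_lapC (hΩ : IsOpen Ω) (hf : ContDiffOn ℝ ∞ f Ω) : ContDiffOn ℝ ∞ (lapC f) Ω :=
  ContDiffOn.sum fun j _ => contDiffOn_pdc hΩ (contDiffOn_pdc hΩ hf j) j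

theorem pdc_comm (hΩ : IsOpen Ω) (hf : ContDiffOn ℝ ∞ f Ω) (hx : x ∈ Ω) :
    pdc (pdc f i) j x = pdc (pdc f j) i x := by
  have hf' : DifferentiableAt ℝ (fderiv ℝ f) x :=
    ((hf.fderiv_of_isOpen (m := ∞) hΩ (by simp)).contDiffAt (hΩ.mem_nhds hx)).differentiableAt
      (by simp)
  have hsymm := (hf.contDiffAt (hΩ.mem_nhds hx)).isSymmSndFDerivAt
    (by simpa using ENat.LEInfty.out)
  change fderiv ℝ (fun y => fderiv ℝ f y _) x _ = fderiv ℝ (fun y => fderiv ℝ f y _) x _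
  simpa [fderiv_clm_apply hf' (differentiableAt_const _)] using hsymm _ _

theorem lapC_sub (hΩ : IsOpen Ω) (hf : ContDiffOn ℝ ∞ f Ω) (hg : ContDiffOn ℝ ∞ g Ω)
    (hx : x ∈ Ω) : lapC (fun y => f y - g y) x = lapC f x - lapC g x := by
  have hpdc (j : Fin N) : pdc (fun y => f y - g y) j =ᶠ[𝓝 x] fun y => pdc f j y - pdc g j y :=
    eventually_of_mem (hΩ.mem_nhds hx) fun y hy =>
      pdc_sub (hf.differentiableAt_of_isOpen hΩ hy) (hg.differentiableAt_of_isOpen hΩ hy)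
  simp only [lapC, ← Finset.sum_sub_distrib]
  refine Finset.sum_congr rfl fun j _ => ?_
  rw [(hpdc j).pdc_eq, pdc_sub ((contDiffOn_pdc hΩ hf j).differentiableAt_of_isOpen hΩ hx)
    ((contDiffOn_pdc hΩ hg j).differentiableAt_of_isOpen hΩ hx)]

theorem lapC_const_mul (hΩ : IsOpen Ω) (hf : ContDiffOn ℝ ∞ f Ω) (hx : x ∈ Ω) (c : ℂ) :
    lapC (fun y => c * f y) x = c * lapC f x := by
  have hpdc (j : Fin N) : pdc (fun y => c * f y) j =ᶠ[𝓝 x] fun y => c * pdc f j y :=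
    eventually_of_mem (hΩ.mem_nhds hx) fun y hy =>
      pdc_const_mul (hf.differentiableAt_of_isOpen hΩ hy) c
  simp only [lapC, Finset.mul_sum]
  refine Finset.sum_congr rfl fun j _ => ?_
  rw [(hpdc j).pdc_eq, pdc_const_mul ((contDiffOn_pdc hΩ hf j).differentiableAt_of_isOpen hΩ hx)]

theorem lapC_sum {ι : Type*} (s : Finset ι) {F : ι → EuclideanSpace ℝ (Fin N) → ℂ}
    (hΩ : IsOpen Ω) (hF : ∀ k ∈ s, ContDiffOn ℝ ∞ (F k) Ω) (hx : x ∈ Ω) :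
    lapC (fun y => ∑ k ∈ s, F k y) x = ∑ k ∈ s, lapC (F k) x := by
  have hpdc (j : Fin N) : pdc (fun y => ∑ k ∈ s, F k y) j =ᶠ[𝓝 x] fun y => ∑ k ∈ s, pdc (F k) j y :=
    eventually_of_mem (hΩ.mem_nhds hx) fun y hy =>
      pdc_sum s fun k hk => (hF k hk).differentiableAt_of_isOpen hΩ hy
  simp only [lapC]
  rw [Finset.sum_comm]
  refine Finset.sum_congr rfl fun j _ => ?_
  rw [(hpdc j).pdc_eq,
    pdc_sum s fun k hk => (contDiffOn_pdc hΩ (hF k hk) j).differentiableAt_of_isOpen hΩ hx]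

theorem pdc_lapC_comm (hΩ : IsOpen Ω) (hf : ContDiffOn ℝ ∞ f Ω) (hx : x ∈ Ω) :
    pdc (lapC f) i x = lapC (pdc f i) x := by
  have hswap (j : Fin N) : pdc (pdc f j) i =ᶠ[𝓝 x] pdc (pdc f i) j :=
    eventually_of_mem (hΩ.mem_nhds hx) fun y hy => pdc_comm hΩ hf hy
  rw [show lapC f = fun y => ∑ j, pdc (pdc f j) j y from rfl, pdc_sum _ fun j _ =>
    (contDiffOn_pdc hΩ (contDiffOn_pdc hΩ hf j) j).differentiableAt_of_isOpen hΩ hx]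
  refine Finset.sum_congr rfl fun j _ => ?_
  rw [pdc_comm hΩ (contDiffOn_pdc hΩ hf j) hx, (hswap j).pdc_eq]

end Calculus

def HelmholtzOn {N : ℕ} (k : ℂ) (f : EuclideanSpace ℝ (Fin N) → ℂ)
    (Ω : Set (EuclideanSpace ℝ (Fin N))) : Prop :=
  ∀ x ∈ Ω, lapC f x + k * f x = 0

namespace HelmholtzOn

variable {N : ℕ} {Ω : Set (EuclideanSpace ℝ (Fin N))} {f : EuclideanSpace ℝ (Fin N) → ℂ} {k : ℂ}

theorem pdc (h : HelmholtzOn k f Ω) (hΩ : IsOpen Ω) (hf : ContDiffOn ℝ ∞ f Ω) (i : Fin N) :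
    HelmholtzOn k (_root_.pdc f i) Ω := by
  intro x hx
  have hlap : lapC f =ᶠ[𝓝 x] fun y => -k * f y :=
    eventually_of_mem (hΩ.mem_nhds hx) fun y hy => by linear_combination h y hy
  rw [← pdc_lapC_comm hΩ hf hx, hlap.pdc_eq, pdc_const_mul (hf.differentiableAt_of_isOpen hΩ hx)]
  ring

theorem const_mul (h : HelmholtzOn k f Ω) (hΩ : IsOpen Ω) (hf : ContDiffOn ℝ ∞ f Ω) (c : ℂ) :
    HelmholtzOn k (fun y => c * f y) Ω := by
  intro x hx
  rw [lapC_const_mul hΩ hf hx]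
  linear_combination c * h x hx

end HelmholtzOn

section Navier

variable {N : ℕ} {mu lam rho om : ℝ} {Ω : Set (EuclideanSpace ℝ (Fin N))}
  {u : EuclideanSpace ℝ (Fin N) → Fin N → ℂ} {x : EuclideanSpace ℝ (Fin N)}

theorem contDiffOn_divC (hΩ : IsOpen Ω) (hu : ContDiffOn ℝ ∞ u Ω) :
    ContDiffOn ℝ ∞ (divC u) Ω :=
  ContDiffOn.sum fun i _ => contDiffOn_pdc hΩ (contDiffOn_pi.mp hu i) i

theorem lapC_divC (hΩ : IsOpen Ω) (hu : ContDiffOn ℝ ∞ u Ω) (hx : x ∈ Ω) :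
    lapC (divC u) x = ∑ i, pdc (lapC (u · i)) i x := by
  have hui := contDiffOn_pi.mp hu
  rw [show divC u = fun y => ∑ i, pdc (u · i) i y from rfl,
    lapC_sum _ hΩ (fun i _ => contDiffOn_pdc hΩ (hui i) i) hx]
  exact Finset.sum_congr rfl fun i _ => (pdc_lapC_comm hΩ (hui i) hx).symm

theorem NavierOn.pdc_eq_zero (hN : NavierOn mu lam rho om u Ω) (hΩ : IsOpen Ω)
    (hu : ContDiffOn ℝ ∞ u Ω) (hx : x ∈ Ω) (i j : Fin N) :
    (mu : ℂ) * pdc (lapC (u · i)) j x + ((lam + mu : ℝ) : ℂ) * pdc (pdc (divC u) i) j x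
      + ((rho * om ^ 2 : ℝ) : ℂ) * pdc (u · i) j x = 0 := by
  have hui := contDiffOn_pi.mp hu i
  have hL := (contDiffOn_lapC hΩ hui).differentiableAt_of_isOpen hΩ hx
  have hP := (contDiffOn_pdc hΩ (contDiffOn_divC hΩ hu) i).differentiableAt_of_isOpen hΩ hx
  have hu' := hui.differentiableAt_of_isOpen hΩ hx
  have hzero : (fun y => (mu : ℂ) * lapC (u · i) y + ((lam + mu : ℝ) : ℂ) * pdc (divC u) i y
      + ((rho * om ^ 2 : ℝ) : ℂ) * u y i) =ᶠ[𝓝 x] fun _ => 0 :=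
    eventually_of_mem (hΩ.mem_nhds hx) fun y hy => hN y hy i
  have := hzero.pdc_eq (j := j)
  rwa [pdc_const, pdc_add (by fun_prop) (by fun_prop), pdc_add (by fun_prop) (by fun_prop),
    pdc_const_mul hL, pdc_const_mul hP, pdc_const_mul hu'] at this

theorem NavierOn.helmholtzOn_divC (hN : NavierOn mu lam rho om u Ω) (hΩ : IsOpen Ω)
    (hu : ContDiffOn ℝ ∞ u Ω) (hlam : lam + 2 * mu ≠ 0) :
    HelmholtzOn ((rho * om ^ 2 / (lam + 2 * mu) : ℝ) : ℂ) (divC u) Ω := by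
  intro x hx
  have hsum := Finset.sum_eq_zero fun i (_ : i ∈ Finset.univ) => hN.pdc_eq_zero hΩ hu hx i i
  rw [Finset.sum_add_distrib, Finset.sum_add_distrib, ← Finset.mul_sum, ← Finset.mul_sum,
    ← Finset.mul_sum, ← lapC_divC hΩ hu hx] at hsum
  change (mu : ℂ) * lapC (divC u) x + ((lam + mu : ℝ) : ℂ) * lapC (divC u) x
    + ((rho * om ^ 2 : ℝ) : ℂ) * divC u x = 0 at hsum
  have hlam' : (lam : ℂ) + 2 * mu ≠ 0 := by exact_mod_cast hlam
  push_cast at hsum ⊢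
  field_simp
  linear_combination hsum

theorem NavierOn.eq_uLong_add_uTrans (hN : NavierOn mu lam rho om u Ω) (hmu : mu ≠ 0)
    (hlam : lam + 2 * mu ≠ 0) (hrho : rho ≠ 0) (hom : om ≠ 0) (hx : x ∈ Ω) (i : Fin N) :
    u x i = uLong mu lam rho om u x i + uTrans mu rho om u x i := by
  have hNx := hN x hx i
  have hmu' : (mu : ℂ) ≠ 0 := by exact_mod_cast hmu
  have hlam' : (lam : ℂ) + 2 * mu ≠ 0 := by exact_mod_cast hlam
  have hrho' : (rho : ℂ) ≠ 0 := by exact_mod_cast hrho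
  have hom' : (om : ℂ) ≠ 0 := by exact_mod_cast hom
  simp only [uLong, uTrans]
  push_cast at hNx ⊢
  field_simp
  linear_combination hNx

theorem NavierOn.helmholtzOn_uLong (hN : NavierOn mu lam rho om u Ω) (hΩ : IsOpen Ω)
    (hu : ContDiffOn ℝ ∞ u Ω) (hlam : lam + 2 * mu ≠ 0) (i : Fin N) :
    HelmholtzOn ((rho * om ^ 2 / (lam + 2 * mu) : ℝ) : ℂ)
      (fun y => uLong mu lam rho om u y i) Ω := by
  have hD := contDiffOn_divC hΩ hu
  have hlong : (fun y => uLong mu lam rho om u y i)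
      = fun y => -(((rho * om ^ 2 / (lam + 2 * mu) : ℝ) : ℂ))⁻¹ * pdc (divC u) i y :=
    funext fun y => by rw [uLong, neg_div, div_eq_inv_mul, neg_mul]
  rw [hlong]
  exact ((hN.helmholtzOn_divC hΩ hu hlam).pdc hΩ hD i).const_mul hΩ (contDiffOn_pdc hΩ hD i) _

theorem NavierOn.helmholtzOn_uTrans (hN : NavierOn mu lam rho om u Ω) (hΩ : IsOpen Ω)
    (hu : ContDiffOn ℝ ∞ u Ω) (hmu : mu ≠ 0) (hlam : lam + 2 * mu ≠ 0) (hrho : rho ≠ 0)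
    (hom : om ≠ 0) (i : Fin N) :
    HelmholtzOn ((rho * om ^ 2 / mu : ℝ) : ℂ) (fun y => uTrans mu rho om u y i) Ω := by
  intro x hx
  have hdecomp : (fun y => uTrans mu rho om u y i) =ᶠ[𝓝 x]
      fun y => u y i - uLong mu lam rho om u y i :=
    eventually_of_mem (hΩ.mem_nhds hx) fun y hy =>
      eq_sub_of_add_eq' (hN.eq_uLong_add_uTrans hmu hlam hrho hom hy i).symm
  have hLong : ContDiffOn ℝ ∞ (fun y => uLong mu lam rho om u y i) Ω :=
    (contDiffOn_pdc hΩ (contDiffOn_divC hΩ hu) i).neg.div_const _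
  rw [hdecomp.lapC_eq, lapC_sub hΩ (contDiffOn_pi.mp hu i) hLong hx,
    eq_neg_of_add_eq_zero_left (hN.helmholtzOn_uLong hΩ hu hlam i x hx)]
  have hmu' : (mu : ℂ) ≠ 0 := by exact_mod_cast hmu
  have hlam' : (lam : ℂ) + 2 * mu ≠ 0 := by exact_mod_cast hlam
  have hrho' : (rho : ℂ) ≠ 0 := by exact_mod_cast hrho
  have hom' : (om : ℂ) ≠ 0 := by exact_mod_cast hom
  simp only [uLong, uTrans]
  push_cast
  field_simp
  ring

end Navier

theorem helmholtz_decomposition_general (N : ℕ)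
    (mu lam rho om : ℝ) (hmu : 0 < mu) (hlam : 0 < lam + 2 * mu)
    (hrho : 0 < rho) (hom : 0 < om)
    (Ω : Set (EuclideanSpace ℝ (Fin N))) (hΩopen : IsOpen Ω)
    (u : EuclideanSpace ℝ (Fin N) → Fin N → ℂ)
    (hu : ContDiffOn ℝ (⊤ : ℕ∞) u Ω)
    (hNavier : NavierOn mu lam rho om u Ω) :
    (∀ x ∈ Ω, ∀ i, u x i = uLong mu lam rho om u x i + uTrans mu rho om u x i) ∧
    (∀ x ∈ Ω, ∀ i, lapC (fun y => uLong mu lam rho om u y i) x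
        + ((rho * om ^ 2 / (lam + 2 * mu) : ℝ) : ℂ) * uLong mu lam rho om u x i = 0) ∧
    (∀ x ∈ Ω, ∀ i, lapC (fun y => uTrans mu rho om u y i) x
        + ((rho * om ^ 2 / mu : ℝ) : ℂ) * uTrans mu rho om u x i = 0) := by
  exact ⟨fun x hx i => hNavier.eq_uLong_add_uTrans hmu.ne' hlam.ne' hrho.ne' hom.ne' hx i,
    fun x hx i => hNavier.helmholtzOn_uLong hΩopen hu hlam.ne' i x hx,
    fun x hx i => hNavier.helmholtzOn_uTrans hΩopen hu hmu.ne' hlam.ne' hrho.ne' hom.ne' i x hx⟩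

/-- Helmholtz decomposition of Navier solutions: if `u` is a smooth solution of the
Navier equation on an open `Ω ⊆ ℝ^N`, with longitudinal part `u_p = −∇(div u)/ω_p²`
and transversal part `u_s = (∇(div u) − Δu)/ω_s²`, then `u = u_p + u_s` on `Ω`,
`Δu_p + ω_p² u_p = 0` and `Δu_s + ω_s² u_s = 0` componentwise on `Ω`. -/
theorem helmholtz_decomposition (N : ℕ) (hN : 2 ≤ N)
    (mu lam rho om : ℝ) (hmu : 0 < mu) (hlam : 0 < lam + 2 * mu)
    (hrho : 0 < rho) (hom : 0 < om)
    (Ω : Set (EuclideanSpace ℝ (Fin N))) (hΩopen : IsOpen Ω)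
    (u : EuclideanSpace ℝ (Fin N) → Fin N → ℂ)
    (hu : ContDiffOn ℝ (⊤ : ℕ∞) u Ω)
    (hNavier : NavierOn mu lam rho om u Ω) :
    (∀ x ∈ Ω, ∀ i, u x i = uLong mu lam rho om u x i + uTrans mu rho om u x i) ∧
    (∀ x ∈ Ω, ∀ i, lapC (fun y => uLong mu lam rho om u y i) x
        + ((rho * om ^ 2 / (lam + 2 * mu) : ℝ) : ℂ) * uLong mu lam rho om u x i = 0) ∧
    (∀ x ∈ Ω, ∀ i, lapC (fun y => uTrans mu rho om u y i) x
        + ((rho * om ^ 2 / mu : ℝ) : ℂ) * uTrans mu rho om u x i = 0) :=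
  helmholtz_decomposition_general N mu lam rho om hmu hlam hrho hom Ω hΩopen u hu hNavier
end
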